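/- arXiv:2109.14893 — 2 statements merged into one kernel-verified Lean document; each statement's English description precedes it below -/
import Mathlib

section
/- (Identity (f₃)₁ = 0.) Under the assumptions and notation of Lemma 5.1 (with additionally Φ̂ = ℛ⁻¹ + ℛ⁻¹𝒮₂Σ̂⁻¹Σ𝒮₂ᵀℛ⁻¹), the following identity holds: Φ̂·D₂ᵀ(P₁−Σ)D₁·K⁻¹ − Φ̂·D₂ᵀP₁D₁·R̂₁⁻¹ + ℛ⁻¹𝒮₂Σ̂⁻¹ΣD₁R̂₁⁻¹ = 0, where K = R₁ + D₁ᵀ(P₁−Σ)D₁. -/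
open Matrix


set_option maxHeartbeats 1600000 in
/-- Identity `(f₃)₁ = 0` from the proof of Theorem 5.3. -/
theorem stmt_8 {n m₁ m₂ : ℕ}
    (P₁ Sig : Matrix (Fin n) (Fin n) ℝ)
    (D₁ : Matrix (Fin n) (Fin m₁) ℝ) (D₂ : Matrix (Fin n) (Fin m₂) ℝ)
    (R₁ : Matrix (Fin m₁) (Fin m₁) ℝ) (R₂ : Matrix (Fin m₂) (Fin m₂) ℝ)
    (hP₁ : P₁.IsSymm) (hSig : Sig.IsSymm) (hR₁ : R₁.IsSymm) (hR₂ : R₂.IsSymm)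
    (R1hat : Matrix (Fin m₁) (Fin m₁) ℝ)
    (hR1hat : R1hat = R₁ + D₁ᵀ * P₁ * D₁) (hR1hatU : IsUnit R1hat)
    (K : Matrix (Fin m₁) (Fin m₁) ℝ)
    (hK : K = R₁ + D₁ᵀ * (P₁ - Sig) * D₁) (hKU : IsUnit K)
    (S₂ : Matrix (Fin m₂) (Fin n) ℝ)
    (hS₂ : S₂ = D₂ᵀ - D₂ᵀ * P₁ * D₁ * R1hat⁻¹ * D₁ᵀ)
    (Ncal : Matrix (Fin n) (Fin n) ℝ)
    (hNcal : Ncal = -(D₁ * R1hat⁻¹ * D₁ᵀ))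
    (Rcal : Matrix (Fin m₂) (Fin m₂) ℝ)
    (hRcal : Rcal = R₂ + D₂ᵀ * P₁ * D₂ - D₂ᵀ * P₁ * D₁ * R1hat⁻¹ * D₁ᵀ * P₁ * D₂)
    (hRcalU : IsUnit Rcal)
    (Sighat : Matrix (Fin n) (Fin n) ℝ)
    (hSighat : Sighat = 1 + Sig * Ncal - Sig * S₂ᵀ * Rcal⁻¹ * S₂) (hSighatU : IsUnit Sighat)
    (Φhat : Matrix (Fin m₂) (Fin m₂) ℝ)
    (hΦhat : Φhat = Rcal⁻¹ + Rcal⁻¹ * S₂ * Sighat⁻¹ * Sig * S₂ᵀ * Rcal⁻¹) :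
    Φhat * (D₂ᵀ * (P₁ - Sig) * D₁) * K⁻¹ - Φhat * (D₂ᵀ * P₁ * D₁) * R1hat⁻¹
      + Rcal⁻¹ * S₂ * Sighat⁻¹ * Sig * D₁ * R1hat⁻¹ = 0 := by
  have hdR1 : IsUnit R1hat.det := (Matrix.isUnit_iff_isUnit_det _).mp hR1hatU
  have hdK : IsUnit K.det := (Matrix.isUnit_iff_isUnit_det _).mp hKU
  have hdS : IsUnit Sighat.det := (Matrix.isUnit_iff_isUnit_det _).mp hSighatU
  have h1 : R1hat⁻¹ * R1hat = 1 := Matrix.nonsing_inv_mul _ hdR1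
  have h2 : K * K⁻¹ = 1 := Matrix.mul_nonsing_inv _ hdK
  have h2' : K⁻¹ * K = 1 := Matrix.nonsing_inv_mul _ hdK
  have h3 : Sighat⁻¹ * Sighat = 1 := Matrix.nonsing_inv_mul _ hdS
  have hK' : K = R1hat - D₁ᵀ * Sig * D₁ := by
    rw [hK, hR1hat]
    simp only [Matrix.mul_add, Matrix.add_mul, Matrix.mul_sub, Matrix.sub_mul,
      Matrix.neg_mul, Matrix.mul_neg, Matrix.mul_one, Matrix.one_mul, Matrix.mul_assoc]
    abel
  have e2 : R1hat⁻¹ * K = 1 - R1hat⁻¹ * (D₁ᵀ * Sig * D₁) := by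
    rw [hK', Matrix.mul_sub, h1]
  set E := Φhat * (D₂ᵀ * (P₁ - Sig) * D₁) * K⁻¹ - Φhat * (D₂ᵀ * P₁ * D₁) * R1hat⁻¹
      + Rcal⁻¹ * S₂ * Sighat⁻¹ * Sig * D₁ * R1hat⁻¹ with hE
  have key : E * K = 0 := by
    have step1 : E * K = Φhat * (D₂ᵀ * (P₁ - Sig) * D₁) * (K⁻¹ * K)
        - Φhat * (D₂ᵀ * P₁ * D₁) * (R1hat⁻¹ * K)
        + Rcal⁻¹ * S₂ * Sighat⁻¹ * Sig * D₁ * (R1hat⁻¹ * K) := by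
      rw [hE]
      simp only [Matrix.mul_add, Matrix.add_mul, Matrix.mul_sub, Matrix.sub_mul,
        Matrix.neg_mul, Matrix.mul_neg, Matrix.mul_one, Matrix.one_mul, Matrix.mul_assoc]
      try abel
    rw [step1, h2', e2, Matrix.mul_one]
    have hZ : -(Sighat * (Sig * D₁)) - Sig * S₂ᵀ * (Rcal⁻¹ * (S₂ * (Sig * D₁)))
        + Sig * D₁ + Sig * Ncal * (Sig * D₁) = 0 := by
      rw [hSighat, hNcal]
      simp only [Matrix.mul_add, Matrix.add_mul, Matrix.mul_sub, Matrix.sub_mul,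
        Matrix.neg_mul, Matrix.mul_neg, Matrix.mul_one, Matrix.one_mul, Matrix.mul_assoc,
        neg_neg]
      try abel
    have hcorr : Rcal⁻¹ * S₂ * ((Sighat⁻¹ * Sighat - 1) * (Sig * D₁)) = 0 := by
      rw [h3, sub_self, Matrix.zero_mul, Matrix.mul_zero]
    have hmain : Φhat * (D₂ᵀ * (P₁ - Sig) * D₁)
        - Φhat * (D₂ᵀ * P₁ * D₁) * (1 - R1hat⁻¹ * (D₁ᵀ * Sig * D₁))
        + Rcal⁻¹ * S₂ * Sighat⁻¹ * Sig * D₁ * (1 - R1hat⁻¹ * (D₁ᵀ * Sig * D₁))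
        = Rcal⁻¹ * S₂ * Sighat⁻¹ * (-(Sighat * (Sig * D₁))
            - Sig * S₂ᵀ * (Rcal⁻¹ * (S₂ * (Sig * D₁))) + Sig * D₁ + Sig * Ncal * (Sig * D₁))
          + Rcal⁻¹ * S₂ * ((Sighat⁻¹ * Sighat - 1) * (Sig * D₁)) := by
      rw [hΦhat, hS₂, hNcal]
      simp only [Matrix.mul_add, Matrix.add_mul, Matrix.mul_sub, Matrix.sub_mul,
        Matrix.neg_mul, Matrix.mul_neg, Matrix.mul_one, Matrix.one_mul, Matrix.mul_assoc,
        neg_neg, Matrix.transpose_sub, Matrix.transpose_mul, Matrix.transpose_transpose]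
      try abel
    rw [hmain, hZ, hcorr, Matrix.mul_zero, add_zero]
  calc E = E * (K * K⁻¹) := by rw [h2, Matrix.mul_one]
    _ = (E * K) * K⁻¹ := by rw [Matrix.mul_assoc]
    _ = 0 := by rw [key, Matrix.zero_mul]
end

section
/- Uniqueness of solutions of the game Riccati equation: Let A, C, B, D, Q, R be bounded measurable matrix-valued functions on [0,T] with Q(s) and R(s) symmetric, and G a symmetric n×n matrix. Suppose P, P̄ : [0,T] → 𝕊ⁿ are absolutely continuous, satisfy Ṗ + PA + AᵀP + CᵀPC + Q − (PB + CᵀPD)(R + DᵀPD)⁻¹(BᵀP + DᵀPC) = 0 a.e. with P(T) = G = P̄(T), and both R + DᵀPD and R + DᵀP̄D are invertible with essentially bounded inverses. Then P = P̄ on [0,T]. -/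
/-!
The difference `Δ = P - P̄` of two solutions vanishes at `T` and, by the resolvent identity
`S⁻¹ - S̄⁻¹ = S⁻¹ (S̄ - S) S̄⁻¹` for `S = R + DᵀPD`, the difference of the Riccati right-hand sides is a sum of
products in which `Δ` occurs exactly once, all other factors (coefficients, the continuous
solutions `P`, `P̄`, and the inverses `S⁻¹`, `S̄⁻¹`) being bounded on `[0, T]`. Hence
`‖Δ t‖ ≤ L ∫ₜᵀ ‖Δ s‖ ds`, and Grönwall's inequality forces `Δ = 0`.
-/

open Matrix MeasureTheory intervalIntegral

attribute [local instance] Matrix.normedAddCommGroup Matrix.normedSpace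

/-- The Riccati right-hand side `F(P)(s)` of the game Riccati equation. -/
noncomputable def riccatiRHS {n m : ℕ}
    (A C : ℝ → Matrix (Fin n) (Fin n) ℝ) (B D : ℝ → Matrix (Fin n) (Fin m) ℝ)
    (Q : ℝ → Matrix (Fin n) (Fin n) ℝ) (R : ℝ → Matrix (Fin m) (Fin m) ℝ)
    (P : ℝ → Matrix (Fin n) (Fin n) ℝ) (s : ℝ) : Matrix (Fin n) (Fin n) ℝ :=
  P s * A s + (A s)ᵀ * P s + (C s)ᵀ * P s * C s + Q s
    - (P s * B s + (C s)ᵀ * P s * D s) * (R s + (D s)ᵀ * P s * D s)⁻¹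
        * ((B s)ᵀ * P s + (D s)ᵀ * P s * C s)

open Set Asymptotics Filter Nat

theorem nonpos_of_le_mul_integral {u : ℝ → ℝ} {a b L : ℝ} (hL : 0 ≤ L)
    (hu : ContinuousOn u (Icc a b)) (h : ∀ t ∈ Icc a b, u t ≤ L * ∫ s in t..b, u s) :
    ∀ t ∈ Icc a b, u t ≤ 0 := by
  obtain ⟨K, hK⟩ := isCompact_Icc.exists_bound_of_continuousOn hu
  have hiter : ∀ k : ℕ, ∀ t ∈ Icc a b, u t ≤ K * (L * (b - t)) ^ k / k ! := by
    intro k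
    induction k with
    | zero => intro t ht; simpa using (le_abs_self _).trans (hK t ht)
    | succ k ih =>
      intro t ht
      have hsub : uIcc t b ⊆ Icc a b := by
        rw [uIcc_of_le ht.2]; exact Icc_subset_Icc_left ht.1
      have hbound_int : IntervalIntegrable (fun s => K * (L * (b - s)) ^ k / k !) volume t b :=
        (by fun_prop : Continuous fun s => K * (L * (b - s)) ^ k / k !).intervalIntegrable _ _
      calc u t ≤ L * ∫ s in t..b, u s := h t ht
        _ ≤ L * ∫ s in t..b, K * (L * (b - s)) ^ k / k ! := by
            gcongr
            exact integral_mono_on ht.2 ((hu.mono hsub).intervalIntegrable) hbound_int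
              fun s hs => ih s (hsub (Icc_subset_uIcc hs))
        _ = L * ∫ x in 0..b - t, K * L ^ k / k ! * x ^ k := by
            rw [integral_comp_sub_left (fun x => K * (L * x) ^ k / k !) b, sub_self]
            congr 1
            exact integral_congr fun x _ => by ring
        _ = K * (L * (b - t)) ^ (k + 1) / (k + 1)! := by
            rw [intervalIntegral.integral_const_mul, integral_pow, factorial_succ, mul_pow]
            push_cast
            field_simp
            ring
  intro t ht
  have hlim := (FloorSemiring.tendsto_pow_div_factorial_atTop (L * (b - t))).const_mul K
  rw [mul_zero] at hlim
  exact ge_of_tendsto' hlim fun k => by simpa only [mul_div_assoc] using hiter k t ht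

theorem eqOn_zero_of_eq_integral_of_norm_le {E : Type*} [NormedAddCommGroup E] [NormedSpace ℝ E]
    {g h : ℝ → E} {a b L : ℝ} (hg : ContinuousOn g (Icc a b))
    (hh : IntervalIntegrable h volume a b) (heq : ∀ t ∈ Icc a b, g t = ∫ s in t..b, h s)
    (hlip : ∀ s ∈ Icc a b, ‖h s‖ ≤ L * ‖g s‖) : EqOn g 0 (Icc a b) := by
  have hlip' : ∀ s ∈ Icc a b, ‖h s‖ ≤ max L 0 * ‖g s‖ := fun s hs =>
    (hlip s hs).trans (by gcongr; exact le_max_left _ _)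
  refine fun t ht => norm_le_zero_iff.mp
    (nonpos_of_le_mul_integral (le_max_right L 0) hg.norm (fun t ht => ?_) t ht)
  have hsub : uIcc t b ⊆ Icc a b := by
    rw [uIcc_of_le ht.2]; exact Icc_subset_Icc_left ht.1
  have hsub' : uIcc t b ⊆ uIcc a b := uIcc_subset_uIcc_right (Icc_subset_uIcc ht)
  calc ‖g t‖ = ‖∫ s in t..b, h s‖ := by rw [heq t ht]
    _ ≤ ∫ s in t..b, ‖h s‖ := norm_integral_le_integral_norm ht.2
    _ ≤ ∫ s in t..b, max L 0 * ‖g s‖ :=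
        integral_mono_on ht.2 (hh.mono_set hsub').norm
          ((continuousOn_const.mul (hg.mono hsub).norm).intervalIntegrable)
          fun s hs => hlip' s (hsub (Icc_subset_uIcc hs))
    _ = max L 0 * ∫ s in t..b, ‖g s‖ := intervalIntegral.integral_const_mul _ _

theorem continuousOn_const_add_integral {E : Type*} [NormedAddCommGroup E] [NormedSpace ℝ E]
    {g : ℝ → E} {a b : ℝ} (hg : IntervalIntegrable g volume a b) (c : E) :
    ContinuousOn (fun t => c + ∫ s in t..b, g s) (Icc a b) := by
  refine ((continuousOn_const (c := c)).sub
    ((continuousOn_primitive_interval' hg right_mem_uIcc).mono Icc_subset_uIcc)).congr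
      fun t _ => ?_
  simp only [Pi.sub_apply, integral_symm t b, sub_neg_eq_add]

section MatrixNorm

variable {ι κ ν α β F : Type*} [Fintype ι] [Fintype κ] [Fintype ν] [NormedRing α]
  [SeminormedAddCommGroup F]
  {l : Filter β} {g : β → F}

-- The entrywise sup norm is not submultiplicative; the inner dimension enters as a factor.
theorem Matrix.norm_mul_le_card_mul (X : Matrix ι κ α) (Y : Matrix κ ν α) :
    ‖X * Y‖ ≤ Fintype.card κ * ‖X‖ * ‖Y‖ := by
  rw [Matrix.norm_le_iff (by positivity)]
  intro i j
  calc ‖(X * Y) i j‖ ≤ ∑ k, ‖X i k * Y k j‖ := by rw [Matrix.mul_apply]; exact norm_sum_le _ _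
    _ ≤ ∑ _k : κ, ‖X‖ * ‖Y‖ := Finset.sum_le_sum fun k _ => (norm_mul_le _ _).trans
          (mul_le_mul (norm_entry_le_entrywise_sup_norm X) (norm_entry_le_entrywise_sup_norm Y)
            (norm_nonneg _) (norm_nonneg _))
    _ = Fintype.card κ * ‖X‖ * ‖Y‖ := by rw [Finset.sum_const, nsmul_eq_mul, mul_assoc]; rfl

theorem Asymptotics.isBigO_matrix_mul_norm_mul_norm (X : β → Matrix ι κ α)
    (Y : β → Matrix κ ν α) : (fun x => X x * Y x) =O[l] fun x => ‖X x‖ * ‖Y x‖ :=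
  isBigO_of_le' (c := Fintype.card κ) l fun x => by
    rw [Real.norm_of_nonneg (by positivity), ← mul_assoc]
    exact norm_mul_le_card_mul _ _

theorem Asymptotics.IsBigO.matrix_mul_bounded {X : β → Matrix ι κ α} {Y : β → Matrix κ ν α}
    (hX : X =O[l] g) (hY : Y =O[l] fun _ => (1 : ℝ)) : (fun x => X x * Y x) =O[l] g := by
  simpa using (isBigO_matrix_mul_norm_mul_norm X Y).trans (hX.norm_norm.mul hY.norm_left)

theorem Asymptotics.IsBigO.bounded_matrix_mul {X : β → Matrix ι κ α} {Y : β → Matrix κ ν α}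
    (hX : X =O[l] fun _ => (1 : ℝ)) (hY : Y =O[l] g) : (fun x => X x * Y x) =O[l] g := by
  simpa using (isBigO_matrix_mul_norm_mul_norm X Y).trans (hX.norm_left.mul hY.norm_norm)

theorem Asymptotics.IsBigO.matrix_transpose {X : β → Matrix ι κ α} (hX : X =O[l] g) :
    (fun x => (X x)ᵀ) =O[l] g :=
  isBigO_norm_left.mp (by simpa only [norm_transpose] using hX.norm_left)

end MatrixNorm

section RiccatiDifference

variable {ι κ α : Type*} [Fintype ι] [Fintype κ] [DecidableEq κ] [CommRing α]

theorem riccati_sub_riccati (a c q p p' : Matrix ι ι α) (b d : Matrix ι κ α) (r : Matrix κ κ α)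
    (hS : IsUnit (r + dᵀ * p * d)) (hS' : IsUnit (r + dᵀ * p' * d)) :
    (p * a + aᵀ * p + cᵀ * p * c + q
      - (p * b + cᵀ * p * d) * (r + dᵀ * p * d)⁻¹ * (bᵀ * p + dᵀ * p * c))
    - (p' * a + aᵀ * p' + cᵀ * p' * c + q
      - (p' * b + cᵀ * p' * d) * (r + dᵀ * p' * d)⁻¹ * (bᵀ * p' + dᵀ * p' * c))
    = (p - p') * a + aᵀ * (p - p') + cᵀ * (p - p') * c
      - ((p - p') * b + cᵀ * (p - p') * d) * (r + dᵀ * p * d)⁻¹ * (bᵀ * p + dᵀ * p * c)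
      + (p' * b + cᵀ * p' * d) * (r + dᵀ * p * d)⁻¹ * (dᵀ * (p - p') * d)
          * (r + dᵀ * p' * d)⁻¹ * (bᵀ * p + dᵀ * p * c)
      - (p' * b + cᵀ * p' * d) * (r + dᵀ * p' * d)⁻¹ * (bᵀ * (p - p') + dᵀ * (p - p') * c) := by
  have hres : (p' * b + cᵀ * p' * d) * (r + dᵀ * p * d)⁻¹ * (dᵀ * (p - p') * d)
        * (r + dᵀ * p' * d)⁻¹ * (bᵀ * p + dᵀ * p * c)
      = (p' * b + cᵀ * p' * d) * ((r + dᵀ * p' * d)⁻¹ - (r + dᵀ * p * d)⁻¹)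
        * (bᵀ * p + dᵀ * p * c) := by
    rw [← neg_sub (r + dᵀ * p * d)⁻¹, Matrix.inv_sub_inv (iff_of_true hS hS')]
    simp only [Matrix.add_mul, Matrix.mul_add, Matrix.sub_mul, Matrix.mul_sub, Matrix.mul_neg,
      Matrix.neg_mul, Matrix.mul_assoc]
    abel
  rw [hres]
  generalize (r + dᵀ * p * d)⁻¹ = u
  generalize (r + dᵀ * p' * d)⁻¹ = v
  simp only [Matrix.add_mul, Matrix.mul_add, Matrix.sub_mul, Matrix.mul_sub]
  abel

end RiccatiDifference

theorem isBigO_riccatiRHS_sub {n m : ℕ} {l : Filter ℝ}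
    {A C : ℝ → Matrix (Fin n) (Fin n) ℝ} {B D : ℝ → Matrix (Fin n) (Fin m) ℝ}
    (Q : ℝ → Matrix (Fin n) (Fin n) ℝ) {R : ℝ → Matrix (Fin m) (Fin m) ℝ}
    {P P' : ℝ → Matrix (Fin n) (Fin n) ℝ}
    (hA : A =O[l] fun _ => (1 : ℝ)) (hB : B =O[l] fun _ => (1 : ℝ))
    (hC : C =O[l] fun _ => (1 : ℝ)) (hD : D =O[l] fun _ => (1 : ℝ))
    (hP : P =O[l] fun _ => (1 : ℝ)) (hP' : P' =O[l] fun _ => (1 : ℝ))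
    (hS : (fun s => (R s + (D s)ᵀ * P s * D s)⁻¹) =O[l] fun _ => (1 : ℝ))
    (hS' : (fun s => (R s + (D s)ᵀ * P' s * D s)⁻¹) =O[l] fun _ => (1 : ℝ))
    (hunit : ∀ᶠ s in l, IsUnit (R s + (D s)ᵀ * P s * D s) ∧ IsUnit (R s + (D s)ᵀ * P' s * D s)) :
    (fun s => riccatiRHS A C B D Q R P s - riccatiRHS A C B D Q R P' s) =O[l]
      fun s => P s - P' s := by
  have hδ : (fun s => P s - P' s) =O[l] fun s => P s - P' s := isBigO_refl _ _
  have hAt := hA.matrix_transpose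
  have hBt := hB.matrix_transpose
  have hCt := hC.matrix_transpose
  have hDt := hD.matrix_transpose
  have hX' : (fun s => P' s * B s + (C s)ᵀ * P' s * D s) =O[l] fun _ => (1 : ℝ) :=
    (hP'.matrix_mul_bounded hB).add ((hCt.matrix_mul_bounded hP').matrix_mul_bounded hD)
  have hY : (fun s => (B s)ᵀ * P s + (D s)ᵀ * P s * C s) =O[l] fun _ => (1 : ℝ) :=
    (hBt.matrix_mul_bounded hP).add ((hDt.matrix_mul_bounded hP).matrix_mul_bounded hC)
  have hlin : (fun s => (P s - P' s) * A s + (A s)ᵀ * (P s - P' s) + (C s)ᵀ * (P s - P' s) * C s)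
      =O[l] fun s => P s - P' s :=
    ((hδ.matrix_mul_bounded hA).add (hAt.bounded_matrix_mul hδ)).add
      ((hCt.bounded_matrix_mul hδ).matrix_mul_bounded hC)
  have hXδ : (fun s => (P s - P' s) * B s + (C s)ᵀ * (P s - P' s) * D s)
      =O[l] fun s => P s - P' s :=
    (hδ.matrix_mul_bounded hB).add ((hCt.bounded_matrix_mul hδ).matrix_mul_bounded hD)
  have hYδ : (fun s => (B s)ᵀ * (P s - P' s) + (D s)ᵀ * (P s - P' s) * C s)
      =O[l] fun s => P s - P' s :=
    (hBt.bounded_matrix_mul hδ).add ((hDt.bounded_matrix_mul hδ).matrix_mul_bounded hC)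
  have hSδ : (fun s => (D s)ᵀ * (P s - P' s) * D s) =O[l] fun s => P s - P' s :=
    (hDt.bounded_matrix_mul hδ).matrix_mul_bounded hD
  refine IsBigO.congr'
    (((hlin.sub ((hXδ.matrix_mul_bounded hS).matrix_mul_bounded hY)).add
      (((hX'.matrix_mul_bounded hS).bounded_matrix_mul hSδ).matrix_mul_bounded hS'
        |>.matrix_mul_bounded hY)).sub ((hX'.matrix_mul_bounded hS').bounded_matrix_mul hYδ))
    (hunit.mono fun s hs => (riccati_sub_riccati _ _ _ _ _ _ _ _ hs.1 hs.2).symm) EventuallyEq.rfl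

theorem stmt_11_general {n m : ℕ} (T : ℝ)
    (A C : ℝ → Matrix (Fin n) (Fin n) ℝ) (B D : ℝ → Matrix (Fin n) (Fin m) ℝ)
    (Q : ℝ → Matrix (Fin n) (Fin n) ℝ) (R : ℝ → Matrix (Fin m) (Fin m) ℝ)
    (G : Matrix (Fin n) (Fin n) ℝ)
    (hbd : ∃ M : ℝ, ∀ s ∈ Set.Icc 0 T,
        ‖A s‖ ≤ M ∧ ‖B s‖ ≤ M ∧ ‖C s‖ ≤ M ∧ ‖D s‖ ≤ M ∧ ‖Q s‖ ≤ M ∧ ‖R s‖ ≤ M)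
    (P Pbar : ℝ → Matrix (Fin n) (Fin n) ℝ)
    -- absolute continuity + satisfying the Riccati ODE a.e., in integral form:
    (hPeq : ∀ t ∈ Set.Icc 0 T, P t = G + ∫ s in t..T, riccatiRHS A C B D Q R P s)
    (hPbareq : ∀ t ∈ Set.Icc 0 T, Pbar t = G + ∫ s in t..T, riccatiRHS A C B D Q R Pbar s)
    (hPint : @IntervalIntegrable _ _ NormedAddGroup.toENormedAddMonoid (riccatiRHS A C B D Q R P) volume 0 T)
    (hPbarint : @IntervalIntegrable _ _ NormedAddGroup.toENormedAddMonoid (riccatiRHS A C B D Q R Pbar) volume 0 T)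
    (hPinv : ∀ s ∈ Set.Icc 0 T, IsUnit (R s + (D s)ᵀ * P s * D s))
    (hPbarinv : ∀ s ∈ Set.Icc 0 T, IsUnit (R s + (D s)ᵀ * Pbar s * D s))
    (hPinvbd : ∃ M : ℝ, ∀ s ∈ Set.Icc 0 T, ‖(R s + (D s)ᵀ * P s * D s)⁻¹‖ ≤ M)
    (hPbarinvbd : ∃ M : ℝ, ∀ s ∈ Set.Icc 0 T, ‖(R s + (D s)ᵀ * Pbar s * D s)⁻¹‖ ≤ M) :
    ∀ t ∈ Set.Icc 0 T, P t = Pbar t := by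
  obtain ⟨M, hM⟩ := hbd
  obtain ⟨K, hK⟩ := hPinvbd
  obtain ⟨K', hK'⟩ := hPbarinvbd
  have bounded {k k' : ℕ} (X : ℝ → Matrix (Fin k) (Fin k') ℝ) (c : ℝ)
      (hX : ∀ s ∈ Icc 0 T, ‖X s‖ ≤ c) : X =O[𝓟 (Icc 0 T)] fun _ => (1 : ℝ) :=
    isBigO_principal.mpr ⟨c, fun s hs => by simpa using hX s hs⟩
  have hPc : ContinuousOn P (Icc 0 T) := (continuousOn_const_add_integral hPint G).congr hPeq
  have hPbarc : ContinuousOn Pbar (Icc 0 T) :=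
    (continuousOn_const_add_integral hPbarint G).congr hPbareq
  obtain ⟨L, hL⟩ := isBigO_principal.mp <| isBigO_riccatiRHS_sub Q
    (bounded A M fun s hs => (hM s hs).1) (bounded B M fun s hs => (hM s hs).2.1)
    (bounded C M fun s hs => (hM s hs).2.2.1) (bounded D M fun s hs => (hM s hs).2.2.2.1)
    (hPc.isBigO_principal isCompact_Icc (by simp))
    (hPbarc.isBigO_principal isCompact_Icc (by simp)) (bounded _ K hK) (bounded _ K' hK')
    (eventually_principal.mpr fun s hs => ⟨hPinv s hs, hPbarinv s hs⟩)
  have hΔ : ∀ t ∈ Icc 0 T, P t - Pbar t =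
      ∫ s in t..T, (riccatiRHS A C B D Q R P s - riccatiRHS A C B D Q R Pbar s) := by
    intro t ht
    have hsub : uIcc t T ⊆ uIcc 0 T := uIcc_subset_uIcc_right (Icc_subset_uIcc ht)
    rw [hPeq t ht, hPbareq t ht, integral_sub (hPint.mono_set hsub) (hPbarint.mono_set hsub),
      add_sub_add_left_eq_sub]
  intro t ht
  exact sub_eq_zero.mp <| eqOn_zero_of_eq_integral_of_norm_le (hPc.sub hPbarc)
    (hPint.sub hPbarint) hΔ hL ht

/-- Uniqueness of solutions of the game Riccati equation (Theorem 5.3, uniqueness part). -/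
theorem stmt_11 {n m : ℕ} (T : ℝ) (hT : 0 < T)
    (A C : ℝ → Matrix (Fin n) (Fin n) ℝ) (B D : ℝ → Matrix (Fin n) (Fin m) ℝ)
    (Q : ℝ → Matrix (Fin n) (Fin n) ℝ) (R : ℝ → Matrix (Fin m) (Fin m) ℝ)
    (G : Matrix (Fin n) (Fin n) ℝ) (hG : G.IsSymm)
    (hQ : ∀ s, (Q s).IsSymm) (hR : ∀ s, (R s).IsSymm)
    (hmeas : (∀ i j, Measurable fun s => A s i j) ∧ (∀ i j, Measurable fun s => B s i j) ∧
        (∀ i j, Measurable fun s => C s i j) ∧ (∀ i j, Measurable fun s => D s i j) ∧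
        (∀ i j, Measurable fun s => Q s i j) ∧ (∀ i j, Measurable fun s => R s i j))
    (hbd : ∃ M : ℝ, ∀ s ∈ Set.Icc 0 T,
        ‖A s‖ ≤ M ∧ ‖B s‖ ≤ M ∧ ‖C s‖ ≤ M ∧ ‖D s‖ ≤ M ∧ ‖Q s‖ ≤ M ∧ ‖R s‖ ≤ M)
    (P Pbar : ℝ → Matrix (Fin n) (Fin n) ℝ)
    (hPsymm : ∀ s, (P s).IsSymm) (hPbarsymm : ∀ s, (Pbar s).IsSymm)
    -- absolute continuity + satisfying the Riccati ODE a.e., in integral form: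
    (hPeq : ∀ t ∈ Set.Icc 0 T, P t = G + ∫ s in t..T, riccatiRHS A C B D Q R P s)
    (hPbareq : ∀ t ∈ Set.Icc 0 T, Pbar t = G + ∫ s in t..T, riccatiRHS A C B D Q R Pbar s)
    (hPint : @IntervalIntegrable _ _ NormedAddGroup.toENormedAddMonoid (riccatiRHS A C B D Q R P) volume 0 T)
    (hPbarint : @IntervalIntegrable _ _ NormedAddGroup.toENormedAddMonoid (riccatiRHS A C B D Q R Pbar) volume 0 T)
    (hPinv : ∀ s ∈ Set.Icc 0 T, IsUnit (R s + (D s)ᵀ * P s * D s))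
    (hPbarinv : ∀ s ∈ Set.Icc 0 T, IsUnit (R s + (D s)ᵀ * Pbar s * D s))
    (hPinvbd : ∃ M : ℝ, ∀ s ∈ Set.Icc 0 T, ‖(R s + (D s)ᵀ * P s * D s)⁻¹‖ ≤ M)
    (hPbarinvbd : ∃ M : ℝ, ∀ s ∈ Set.Icc 0 T, ‖(R s + (D s)ᵀ * Pbar s * D s)⁻¹‖ ≤ M) :
    ∀ t ∈ Set.Icc 0 T, P t = Pbar t :=
  stmt_11_general T A C B D Q R G hbd P Pbar hPeq hPbareq hPint hPbarint hPinv hPbarinv hPinvbd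
    hPbarinvbd
end
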